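/- Graph comparison: Assume 1 < γ ≤ 5/3. For all p ∈ [0, p_min], φ_R(p) = φ(p), and for all p > p_min, φ_R(p) < φ(p). -/

import Mathlib

/-!
Below `p_Z`, `f(·, Z)` is its rarefaction branch, so everything reduces to showing that the shock
branch exceeds the rarefaction branch for `p > p_Z`. Both branches are `√(p_Z (1 - bρ_Z) / ρ_Z)`
times a function of `q = p / p_Z` alone, namely `2√γ/(γ-1) (q^θ - 1)` and
`(q - 1) √(2/(γ+1)) (q + μ)^(-1/2)` with `θ = (γ-1)/(2γ)`, `μ = (γ-1)/(γ+1)`. They agree at `q = 1`,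
and comparing their derivatives reduces, after squaring, to `2T³ < γ S² q^((γ+1)/γ)` with
`T = (γ+1)q + γ - 1`, `S = (γ+1)q + 3γ - 1`. Equality holds at `q = 1`, and the derivative of
`γ S² q^((γ+1)/γ) / T³` has the sign of `(q - 1)((γ+1)q - (γ-1)(3γ-1))`, which is positive for
`q > 1` because `(γ-1)(3γ-1) ≤ γ + 1` when `γ ≤ 5/3`.
-/

open Real Set

theorem lt_of_hasDerivAt_pos {f f' : ℝ → ℝ} {a x : ℝ}
    (hf : ∀ y, a ≤ y → HasDerivAt f (f' y) y) (hf' : ∀ y, a < y → 0 < f' y) (hx : a < x) :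
    f a < f x := by
  refine strictMonoOn_of_deriv_pos (convex_Ici a)
    (fun y hy => (hf y hy).continuousAt.continuousWithinAt) (fun y hy => ?_)
    self_mem_Ici hx.le hx
  rw [interior_Ici] at hy
  rw [(hf y hy.le).deriv]
  exact hf' y hy

section Dimensionless

variable {γ : ℝ}

theorem two_mul_cube_lt_mul_sq_mul_rpow (hγ1 : 1 < γ) (hγ2 : γ ≤ 5 / 3) {x : ℝ} (hx : 1 < x) :
    2 * ((γ + 1) * x + γ - 1) ^ 3 < γ * ((γ + 1) * x + 3 * γ - 1) ^ 2 * x ^ ((γ + 1) / γ) := by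
  set g : ℝ → ℝ := fun y =>
    γ * ((γ + 1) * y + 3 * γ - 1) ^ 2 * y ^ ((γ + 1) / γ) / ((γ + 1) * y + γ - 1) ^ 3
  have hT : ∀ y : ℝ, 1 ≤ y → 0 < (γ + 1) * y + γ - 1 := fun y hy => by nlinarith
  have hg : ∀ y : ℝ, 1 ≤ y → HasDerivAt g ((γ + 1) * (y - 1) * ((γ + 1) * y - (γ - 1) * (3 * γ - 1))
      * y ^ (1 / γ) * ((γ + 1) * y + 3 * γ - 1) / ((γ + 1) * y + γ - 1) ^ 4) y := by
    intro y hy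
    have hy0 : y ≠ 0 := by positivity
    have hS' : HasDerivAt (fun z : ℝ => (γ + 1) * z + 3 * γ - 1) (γ + 1) y := by
      simpa using ((hasDerivAt_id y).const_mul (γ + 1)).add_const (3 * γ - 1)
    have hT' : HasDerivAt (fun z : ℝ => (γ + 1) * z + γ - 1) (γ + 1) y := by
      simpa using ((hasDerivAt_id y).const_mul (γ + 1)).add_const (γ - 1)
    have := (((hS'.pow 2).const_mul γ).mul
      (hasDerivAt_rpow_const (p := (γ + 1) / γ) (Or.inl hy0))).div
      (hT'.pow 3) (pow_ne_zero 3 (hT y hy).ne')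
    refine this.congr_deriv ?_
    have hsplit : y ^ ((γ + 1) / γ) = y * y ^ (1 / γ) := by
      rw [add_div, div_self (by positivity), Real.rpow_add (by positivity), Real.rpow_one]
    have hsub : (γ + 1) / γ - 1 = 1 / γ := by field_simp; ring
    simp only [Pi.pow_apply, Pi.mul_apply, Nat.cast_ofNat, Nat.reduceSub, pow_one]
    rw [hsplit, hsub]
    have hγ0 : γ ≠ 0 := by positivity
    have hT0 := (hT y hy).ne'
    field_simp
    ring
  have hlt := lt_of_hasDerivAt_pos hg (fun y hy => ?_) hx
  · have hg1 : g 1 = 2 := by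
      have : γ ≠ 0 := by positivity
      simp only [g, Real.one_rpow, mul_one]
      rw [show γ + 1 + 3 * γ - 1 = 4 * γ by ring, show γ + 1 + γ - 1 = 2 * γ by ring]
      field_simp
      ring
    rw [hg1, lt_div_iff₀ (pow_pos (hT x hx.le) 3)] at hlt
    linarith
  · have hy0 : 0 < y := by linarith
    have hfactor : 0 < (γ + 1) * y - (γ - 1) * (3 * γ - 1) := by nlinarith
    have hS : 0 < (γ + 1) * y + 3 * γ - 1 := by nlinarith
    exact div_pos (mul_pos (mul_pos (mul_pos (mul_pos (by linarith) (by linarith)) hfactor)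
      (rpow_pos_of_pos hy0 _)) hS) (pow_pos (hT y hy.le) 4)

theorem rpow_sub_one_div_sqrt_lt (hγ1 : 1 < γ) (hγ2 : γ ≤ 5 / 3) {y : ℝ} (hy : 1 < y) :
    y ^ ((γ - 1) / (2 * γ) - 1) / √γ
      < √(2 / (γ + 1)) * ((y + (γ - 1) / (γ + 1)) - (y - 1) / 2)
          * (y + (γ - 1) / (γ + 1)) ^ (-(3 / 2) : ℝ) := by
  have hγ0 : 0 < γ := by linarith
  have hy0 : 0 < y := by linarith
  have hμ : 0 < (γ - 1) / (γ + 1) := div_pos (by linarith) (by linarith)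
  have hyμ : 0 < y + (γ - 1) / (γ + 1) := by linarith
  have hT : 0 < (γ + 1) * y + γ - 1 := by nlinarith
  have hS : 0 < (γ + 1) * y + 3 * γ - 1 := by nlinarith
  have hM : 0 < (y + (γ - 1) / (γ + 1)) - (y - 1) / 2 := by linarith
  refine lt_of_pow_lt_pow_left₀ 2 (by positivity) ?_
  have hlhs : (y ^ ((γ - 1) / (2 * γ) - 1) / √γ) ^ 2 = 1 / (γ * y ^ ((γ + 1) / γ)) := by
    rw [div_pow, Real.sq_sqrt hγ0.le, ← Real.rpow_natCast, ← Real.rpow_mul hy0.le,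
      show ((γ - 1) / (2 * γ) - 1) * ((2 : ℕ) : ℝ) = -((γ + 1) / γ) by field_simp; ring,
      Real.rpow_neg hy0.le]
    field_simp
  have hrhs : (√(2 / (γ + 1)) * ((y + (γ - 1) / (γ + 1)) - (y - 1) / 2)
      * (y + (γ - 1) / (γ + 1)) ^ (-(3 / 2) : ℝ)) ^ 2
      = ((γ + 1) * y + 3 * γ - 1) ^ 2 / (2 * ((γ + 1) * y + γ - 1) ^ 3) := by
    have hM_eq : (y + (γ - 1) / (γ + 1)) - (y - 1) / 2
        = ((γ + 1) * y + 3 * γ - 1) / (2 * (γ + 1)) := by field_simp; ring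
    rw [mul_pow, mul_pow, Real.sq_sqrt (by positivity), ← Real.rpow_natCast (_ ^ _),
      ← Real.rpow_mul hyμ.le, show (-(3 / 2) : ℝ) * ((2 : ℕ) : ℝ) = -((3 : ℕ) : ℝ) by norm_num,
      Real.rpow_neg hyμ.le, Real.rpow_natCast, hM_eq,
      show y + (γ - 1) / (γ + 1) = ((γ + 1) * y + γ - 1) / (γ + 1) by field_simp; ring]
    field_simp
  rw [hlhs, hrhs, div_lt_div_iff₀ (by positivity) (by positivity)]
  linarith [two_mul_cube_lt_mul_sq_mul_rpow hγ1 hγ2 hy]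

theorem rarefaction_lt_shock_of_one_lt (hγ1 : 1 < γ) (hγ2 : γ ≤ 5 / 3) {q : ℝ} (hq : 1 < q) :
    2 * √γ / (γ - 1) * (q ^ ((γ - 1) / (2 * γ)) - 1)
      < (q - 1) * √(2 / (γ + 1)) * (q + (γ - 1) / (γ + 1)) ^ (-(1 / 2) : ℝ) := by
  set μ := (γ - 1) / (γ + 1)
  set θ := (γ - 1) / (2 * γ)
  have hμ : 0 < μ := div_pos (by linarith) (by linarith)
  set F : ℝ → ℝ := fun y => (y - 1) * √(2 / (γ + 1)) * (y + μ) ^ (-(1 / 2) : ℝ)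
    - 2 * √γ / (γ - 1) * (y ^ θ - 1)
  have hF : ∀ y, 1 ≤ y → HasDerivAt F (√(2 / (γ + 1)) * ((y + μ) - (y - 1) / 2)
      * (y + μ) ^ (-(3 / 2) : ℝ) - y ^ (θ - 1) / √γ) y := by
    intro y hy
    have hy0 : 0 < y := by linarith
    have hyμ : 0 < y + μ := by linarith
    have := ((((hasDerivAt_id y).sub_const 1).mul_const √(2 / (γ + 1))).mul
      (((hasDerivAt_id y).add_const μ).rpow_const (p := -(1 / 2)) (Or.inl hyμ.ne'))).sub
      (((hasDerivAt_rpow_const (p := θ) (Or.inl hy0.ne')).sub_const 1).const_mul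
        (2 * √γ / (γ - 1)))
    refine this.congr_deriv ?_
    have hsplit : (y + μ) ^ (-(1 / 2) : ℝ) = (y + μ) * (y + μ) ^ (-(3 / 2) : ℝ) := by
      rw [← Real.rpow_one_add' hyμ.le (by norm_num)]; norm_num
    have hcoef : 2 * √γ / (γ - 1) * θ = 1 / √γ := by
      rw [← Real.sqrt_div_self']
      simp only [θ]
      field_simp [show γ - 1 ≠ 0 by linarith]
    simp only [id]
    rw [show (-(1 / 2) : ℝ) - 1 = -(3 / 2) by norm_num, hsplit, ← mul_assoc _ θ, hcoef]
    ring
  have hlt := lt_of_hasDerivAt_pos hF (fun y hy => ?_) hq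
  · simpa [F] using hlt
  · rw [sub_pos]
    exact rpow_sub_one_div_sqrt_lt hγ1 hγ2 hy

end Dimensionless

section Curves

-- `c` is the covolume factor `1 - bρ_Z` and `pz` is `p_Z`; the sound speed `a_Z` is unfolded.
noncomputable def rarefactionCurve (γ ρ c pz p : ℝ) : ℝ :=
  2 * √(γ * pz / (ρ * c)) * c / (γ - 1) * ((p / pz) ^ ((γ - 1) / (2 * γ)) - 1)

noncomputable def shockCurve (γ ρ c pz p : ℝ) : ℝ :=
  (p - pz) * √(2 * c / ((γ + 1) * ρ) / (p + (γ - 1) / (γ + 1) * pz))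

noncomputable def waveCurve (γ ρ c pz p : ℝ) : ℝ :=
  if pz ≤ p then shockCurve γ ρ c pz p else rarefactionCurve γ ρ c pz p

variable {γ ρ c pz : ℝ}

theorem rarefactionCurve_eq_sqrt_mul (hγ : 0 ≤ γ) (hρ : 0 < ρ) (hc : 0 < c) (hpz : 0 < pz) (p : ℝ) :
    rarefactionCurve γ ρ c pz p
      = √(pz * c / ρ) * (2 * √γ / (γ - 1) * ((p / pz) ^ ((γ - 1) / (2 * γ)) - 1)) := by
  have : √(γ * pz / (ρ * c)) * c = √γ * √(pz * c / ρ) := by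
    rw [← Real.sqrt_mul hγ, ← Real.sqrt_sq hc.le, ← Real.sqrt_mul (by positivity),
      Real.sqrt_sq hc.le]
    congr 1
    field_simp
  unfold rarefactionCurve
  rw [mul_assoc 2, this]
  ring

theorem shockCurve_eq_sqrt_mul (hγ : 1 < γ) (hρ : 0 < ρ) (hc : 0 < c) (hpz : 0 < pz) {p : ℝ}
    (hp : 0 < p) :
    shockCurve γ ρ c pz p
      = √(pz * c / ρ)
        * ((p / pz - 1) * √(2 / (γ + 1)) * (p / pz + (γ - 1) / (γ + 1)) ^ (-(1 / 2) : ℝ)) := by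
  have hμ : 0 < p / pz + (γ - 1) / (γ + 1) := by
    have : 0 < (γ - 1) / (γ + 1) := div_pos (by linarith) (by linarith)
    positivity
  rw [Real.rpow_neg hμ.le, ← Real.sqrt_eq_rpow, ← Real.sqrt_inv, mul_assoc _ (√_),
    ← Real.sqrt_mul (by positivity), ← mul_assoc, mul_comm _ (p / pz - 1), mul_assoc,
    ← Real.sqrt_mul (by positivity)]
  unfold shockCurve
  have : p - pz = (p / pz - 1) * pz := by field_simp
  rw [this, mul_assoc, ← Real.sqrt_sq hpz.le, ← Real.sqrt_mul (sq_nonneg pz), Real.sqrt_sq hpz.le]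
  congr 2
  field_simp

theorem rarefactionCurve_lt_shockCurve (hγ1 : 1 < γ) (hγ2 : γ ≤ 5 / 3) (hρ : 0 < ρ) (hc : 0 < c)
    (hpz : 0 < pz) {p : ℝ} (hp : pz < p) :
    rarefactionCurve γ ρ c pz p < shockCurve γ ρ c pz p := by
  rw [rarefactionCurve_eq_sqrt_mul (by linarith) hρ hc hpz,
    shockCurve_eq_sqrt_mul hγ1 hρ hc hpz (hpz.trans hp)]
  exact mul_lt_mul_of_pos_left
    (rarefaction_lt_shock_of_one_lt hγ1 hγ2 ((one_lt_div hpz).2 hp)) (by positivity)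

theorem waveCurve_of_le (hpz : pz ≠ 0) {p : ℝ} (hp : p ≤ pz) :
    waveCurve γ ρ c pz p = rarefactionCurve γ ρ c pz p := by
  unfold waveCurve
  split_ifs with h
  · obtain rfl := le_antisymm hp h
    simp [shockCurve, rarefactionCurve, div_self hpz]
  · rfl

theorem rarefactionCurve_lt_waveCurve (hγ1 : 1 < γ) (hγ2 : γ ≤ 5 / 3) (hρ : 0 < ρ) (hc : 0 < c)
    (hpz : 0 < pz) {p : ℝ} (hp : pz < p) :
    rarefactionCurve γ ρ c pz p < waveCurve γ ρ c pz p := by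
  rw [waveCurve, if_pos hp.le]
  exact rarefactionCurve_lt_shockCurve hγ1 hγ2 hρ hc hpz hp

theorem rarefactionCurve_le_waveCurve (hγ1 : 1 < γ) (hγ2 : γ ≤ 5 / 3) (hρ : 0 < ρ) (hc : 0 < c)
    (hpz : 0 < pz) (p : ℝ) :
    rarefactionCurve γ ρ c pz p ≤ waveCurve γ ρ c pz p := by
  rcases le_or_gt p pz with hp | hp
  · rw [waveCurve_of_le hpz.ne' hp]
  · exact (rarefactionCurve_lt_waveCurve hγ1 hγ2 hρ hc hpz hp).le

end Curves

theorem stmt_16_general (γ b ρL ρR uL uR pL pR aL aR : ℝ) (φ φR : ℝ → ℝ)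
    (hγ1 : 1 < γ) (hγ2 : γ ≤ 5/3)
    (hρL : 0 < ρL) (hρR : 0 < ρR) (hpL : 0 < pL) (hpR : 0 < pR)
    (hcovL0 : 0 < 1 - b * ρL)
    (hcovR0 : 0 < 1 - b * ρR)
    (haL : aL = Real.sqrt (γ * pL / (ρL * (1 - b * ρL))))
    (haR : aR = Real.sqrt (γ * pR / (ρR * (1 - b * ρR))))
    (hφ : ∀ p, φ p =
      (if pL ≤ p then
          (p - pL) * Real.sqrt (2 * (1 - b * ρL) / ((γ + 1) * ρL) /
            (p + (γ - 1) / (γ + 1) * pL))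
        else
          2 * aL * (1 - b * ρL) / (γ - 1) * ((p / pL) ^ ((γ - 1) / (2 * γ)) - 1)) +
      (if pR ≤ p then
          (p - pR) * Real.sqrt (2 * (1 - b * ρR) / ((γ + 1) * ρR) /
            (p + (γ - 1) / (γ + 1) * pR))
        else
          2 * aR * (1 - b * ρR) / (γ - 1) * ((p / pR) ^ ((γ - 1) / (2 * γ)) - 1)) +
      uR - uL)
    (hφR : ∀ p, φR p =
      2 * aL * (1 - b * ρL) / (γ - 1) * ((p / pL) ^ ((γ - 1) / (2 * γ)) - 1) +
      2 * aR * (1 - b * ρR) / (γ - 1) * ((p / pR) ^ ((γ - 1) / (2 * γ)) - 1) +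
      uR - uL) :
    (∀ p, 0 ≤ p → p ≤ min pL pR → φR p = φ p) ∧
      ∀ p, min pL pR < p → φR p < φ p := by
  subst haL haR
  have hφ' : ∀ p, φ p = waveCurve γ ρL (1 - b * ρL) pL p + waveCurve γ ρR (1 - b * ρR) pR p
      + uR - uL := hφ
  have hφR' : ∀ p, φR p = rarefactionCurve γ ρL (1 - b * ρL) pL p
      + rarefactionCurve γ ρR (1 - b * ρR) pR p + uR - uL := hφR
  refine ⟨fun p _ hp => ?_, fun p hp => ?_⟩
  · rw [hφ', hφR', waveCurve_of_le hpL.ne' (hp.trans (min_le_left _ _)),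
      waveCurve_of_le hpR.ne' (hp.trans (min_le_right _ _))]
  · rw [hφ', hφR']
    have hL := rarefactionCurve_le_waveCurve hγ1 hγ2 hρL hcovL0 hpL p
    have hR := rarefactionCurve_le_waveCurve hγ1 hγ2 hρR hcovR0 hpR p
    rcases min_lt_iff.1 hp with h | h
    · linarith [rarefactionCurve_lt_waveCurve hγ1 hγ2 hρL hcovL0 hpL h]
    · linarith [rarefactionCurve_lt_waveCurve hγ1 hγ2 hρR hcovR0 hpR h]

theorem stmt_16 (γ b ρL ρR uL uR pL pR aL aR : ℝ) (φ φR : ℝ → ℝ)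
    (hγ1 : 1 < γ) (hγ2 : γ ≤ 5/3) (hb : 0 ≤ b)
    (hρL : 0 < ρL) (hρR : 0 < ρR) (hpL : 0 < pL) (hpR : 0 < pR)
    (hcovL0 : 0 < 1 - b * ρL) (hcovL1 : 1 - b * ρL < 1)
    (hcovR0 : 0 < 1 - b * ρR) (hcovR1 : 1 - b * ρR < 1)
    (haL : aL = Real.sqrt (γ * pL / (ρL * (1 - b * ρL))))
    (haR : aR = Real.sqrt (γ * pR / (ρR * (1 - b * ρR))))
    (hφ : ∀ p, φ p =
      (if pL ≤ p then
          (p - pL) * Real.sqrt (2 * (1 - b * ρL) / ((γ + 1) * ρL) /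
            (p + (γ - 1) / (γ + 1) * pL))
        else
          2 * aL * (1 - b * ρL) / (γ - 1) * ((p / pL) ^ ((γ - 1) / (2 * γ)) - 1)) +
      (if pR ≤ p then
          (p - pR) * Real.sqrt (2 * (1 - b * ρR) / ((γ + 1) * ρR) /
            (p + (γ - 1) / (γ + 1) * pR))
        else
          2 * aR * (1 - b * ρR) / (γ - 1) * ((p / pR) ^ ((γ - 1) / (2 * γ)) - 1)) +
      uR - uL)
    (hφR : ∀ p, φR p =
      2 * aL * (1 - b * ρL) / (γ - 1) * ((p / pL) ^ ((γ - 1) / (2 * γ)) - 1) +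
      2 * aR * (1 - b * ρR) / (γ - 1) * ((p / pR) ^ ((γ - 1) / (2 * γ)) - 1) +
      uR - uL) :
    (∀ p, 0 ≤ p → p ≤ min pL pR → φR p = φ p) ∧
      ∀ p, min pL pR < p → φR p < φ p :=
  stmt_16_general γ b ρL ρR uL uR pL pR aL aR φ φR hγ1 hγ2 hρL hρR hpL hpR hcovL0 hcovR0 haL haR hφ
    hφR
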